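/- Existence and uniqueness of the discrete state vector (Corollary 4.2): assume in addition that Γ_{lα} > 0 for at least one pair (l,α) with α ∈ 𝒜(Ê_{lh}), and that the graph with vertex set 𝒜(Q_h) and edge set consisting of all pairs {α, α+eᵢ} with α ∈ 𝒜(Q_h⁺), or α ∈ 𝒜(S_h) ∩ (𝒜(Q_h^{(i)}) ∖ 𝒜(Q_h⁺)), is connected. Then there exists exactly one discrete state vector, i.e. exactly one grid function u : 𝒜(Q_h) → ℝ satisfying the discrete variational identity for all grid test functions η. -/

import Mathlib

/-! The left-hand side of the identity is a bilinear form `a_h(u, η)` which, in both arguments,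
only sees the values of grid functions on `𝒜(Q_h)`: every difference quotient carrying a nonzero
weight joins two nodes of `𝒜(Q_h)`. On the finite-dimensional space of grid functions supported
in `𝒜(Q_h)` it therefore suffices that `a_h(u, u) = 0` forces `u = 0`. Now `a_h(u, u)` is a sum
of nonnegative terms, so all of them vanish: `u` has zero difference along every edge of the grid
graph, hence is constant on it by connectedness, and it vanishes at a node where some
`Γ_{lα} > 0`. -/

open MeasureTheory Finset

/-- The natural corner `x_α = hα` of the cell `C_h^α`, as a point of `ℝⁿ`. -/
noncomputable def gridCorner (n : ℕ) (h : ℝ) (α : Fin n → ℤ) : EuclideanSpace ℝ (Fin n) :=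
  WithLp.toLp 2 (fun i => (α i : ℝ) * h)

/-- The closed cell `C_h^α = ∏ᵢ [kᵢh, (kᵢ+1)h]`. -/
def gridCell (n : ℕ) (h : ℝ) (α : Fin n → ℤ) : Set (EuclideanSpace ℝ (Fin n)) :=
  {x | ∀ i, (α i : ℝ) * h ≤ x i ∧ x i ≤ ((α i : ℝ) + 1) * h}

/-- Forward difference quotient `u_{α xᵢ} = (u_{α+eᵢ} - u_α)/h` of a grid function. -/
noncomputable def gridFwdDiff (n : ℕ) (h : ℝ) (u : (Fin n → ℤ) → ℝ) (α : Fin n → ℤ)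
    (i : Fin n) : ℝ :=
  (u (α + Pi.single i 1) - u α) / h

theorem Relation.ReflTransGen.apply_eq {α β : Type*} {r : α → α → Prop} {f : α → β}
    (hf : ∀ a b, r a b → f a = f b) {a b : α} (hab : ReflTransGen r a b) : f a = f b := by
  induction hab with
  | refl => rfl
  | tail _ hbc ih => exact ih.trans (hf _ _ hbc)

theorem Finset.sum_mul_eq_zero_iff_of_nonneg {ι R : Type*} [Semiring R] [PartialOrder R]
    [IsOrderedRing R] [NoZeroDivisors R] {s : Finset ι} {w g : ι → R}
    (hw : ∀ i ∈ s, 0 ≤ w i) (hg : ∀ i ∈ s, 0 ≤ g i) :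
    ∑ i ∈ s, w i * g i = 0 ↔ ∀ i ∈ s, w i = 0 ∨ g i = 0 := by
  simp only [sum_eq_zero_iff_of_nonneg fun i hi => mul_nonneg (hw i hi) (hg i hi), mul_eq_zero]

namespace LinearMap.BilinForm

theorem existsUnique_supported_apply_eq {K ι : Type*} [Field K] (A : Finset ι)
    {B : LinearMap.BilinForm K (ι → K)} {L : Module.Dual K (ι → K)}
    (hB_local : ∀ u η, (∀ i ∈ A, η i = 0) → B u η = 0)
    (hL_local : ∀ η, (∀ i ∈ A, η i = 0) → L η = 0)
    (hB : ∀ u, (∀ i ∉ A, u i = 0) → B u u = 0 → u = 0) :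
    ∃! u : ι → K, (∀ i ∉ A, u i = 0) ∧ ∀ η, B u η = L η := by
  set e := Function.ExtendByZero.linearMap K (Subtype.val : A → ι)
  set r := LinearMap.funLeft K K (Subtype.val : A → ι)
  have he_supp : ∀ f, ∀ i ∉ A, e f i = 0 := fun f i hi => by
    simp only [e, Function.ExtendByZero.linearMap_apply]
    exact Function.extend_apply' _ _ _ fun ⟨a, ha⟩ => hi (ha ▸ a.2)
  have hre : ∀ f, r (e f) = f := fun f => funext fun a => by
    simp only [r, e, LinearMap.funLeft_apply, Function.ExtendByZero.linearMap_apply]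
    exact Subtype.val_injective.extend_apply _ _ _
  have hsub : ∀ η, ∀ i ∈ A, (η - e (r η)) i = 0 := fun η i hi => by
    have : e (r η) i = η i := Subtype.val_injective.extend_apply (r η) 0 ⟨i, hi⟩
    rw [Pi.sub_apply, this, sub_self]
  have hnd : (B.compl₁₂ e e).Nondegenerate := by
    have hker : ∀ f, B (e f) (e f) = 0 → f = 0 := fun f hf => by
      rw [← hre f, hB _ (he_supp f) hf, map_zero]
    exact ⟨fun f hf => hker f (hf f), fun f hf => hker f (hf f)⟩
  obtain ⟨f, hf⟩ := (toDual (B.compl₁₂ e e) hnd).surjective (L ∘ₗ e)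
  have hsol : ∀ η, B (e f) η = L η := fun η => by
    have hfη : B (e f) (e (r η)) = L (e (r η)) := by
      simpa [toDual_def] using LinearMap.congr_fun hf (r η)
    have hBη := hB_local (e f) _ (hsub η)
    have hLη := hL_local _ (hsub η)
    rw [map_sub] at hBη hLη
    linear_combination hfη + hBη - hLη
  refine ⟨e f, ⟨he_supp f, hsol⟩, fun v ⟨hv, hvsol⟩ => sub_eq_zero.mp (hB _ ?_ ?_)⟩
  · intro i hi
    simp [hv i hi, he_supp f i hi]
  · simp [hvsol, hsol]

end LinearMap.BilinForm

theorem gridCorner_add_single_mem_gridCell {n : ℕ} {h : ℝ} (hh : 0 ≤ h) (α : Fin n → ℤ)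
    (i : Fin n) : gridCorner n h (α + Pi.single i 1) ∈ gridCell n h α := fun j => by
  rcases eq_or_ne j i with rfl | hji
  · simp [gridCorner, hh, add_mul]
  · simp [gridCorner, Pi.single_eq_of_ne hji, hh, add_mul]

theorem gridCorner_mem_gridCell {n : ℕ} {h : ℝ} (hh : 0 ≤ h) (α : Fin n → ℤ) :
    gridCorner n h α ∈ gridCell n h α := fun j => by
  simp [gridCorner, hh, add_mul]

theorem gridFwdDiff_eq_zero_iff {n : ℕ} {h : ℝ} (hh : h ≠ 0) {u : (Fin n → ℤ) → ℝ}
    {α : Fin n → ℤ} {i : Fin n} : gridFwdDiff n h u α i = 0 ↔ u (α + Pi.single i 1) = u α := by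
  rw [gridFwdDiff, div_eq_zero_iff, sub_eq_zero, or_iff_left hh]

noncomputable def gridFwdDiffₗ (n : ℕ) (h : ℝ) (α : Fin n → ℤ) (i : Fin n) :
    ((Fin n → ℤ) → ℝ) →ₗ[ℝ] ℝ :=
  h⁻¹ • (LinearMap.proj (R := ℝ) (φ := fun _ ↦ ℝ) (α + Pi.single i 1) - LinearMap.proj α)

@[simp]
theorem gridFwdDiffₗ_apply (n : ℕ) (h : ℝ) (α : Fin n → ℤ) (i : Fin n) (u : (Fin n → ℤ) → ℝ) :
    gridFwdDiffₗ n h α i u = gridFwdDiff n h u α i := by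
  simp [gridFwdDiffₗ, gridFwdDiff, div_eq_inv_mul]

noncomputable def discreteForm (n m : ℕ) (h : ℝ) (Aplus AS : Finset (Fin n → ℤ))
    (Ai : Fin n → Finset (Fin n → ℤ)) (AE : Fin m → Finset (Fin n → ℤ))
    (Γ : Fin m → (Fin n → ℤ) → ℝ) (Z : Fin m → ℝ) (σ : (Fin n → ℤ) → ℝ) :
    LinearMap.BilinForm ℝ ((Fin n → ℤ) → ℝ) :=
  let sq (φ : ((Fin n → ℤ) → ℝ) →ₗ[ℝ] ℝ) := (LinearMap.mul ℝ ℝ).compl₁₂ φ φ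
  h ^ n • ∑ α ∈ Aplus, σ α • ∑ i, sq (gridFwdDiffₗ n h α i)
    + ∑ l, (Z l)⁻¹ • ∑ α ∈ AE l, Γ l α • sq (LinearMap.proj α)
    + h ^ n • ∑ α ∈ AS, ∑ i,
        (if α ∈ Ai i ∧ α ∉ Aplus then (1 : ℝ) else 0) • sq (gridFwdDiffₗ n h α i)

noncomputable def discreteLoad (n m : ℕ) (AE : Fin m → Finset (Fin n → ℤ))
    (Γ : Fin m → (Fin n → ℤ) → ℝ) (Z U : Fin m → ℝ) : Module.Dual ℝ ((Fin n → ℤ) → ℝ) :=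
  ∑ l, (U l / Z l) • ∑ α ∈ AE l, Γ l α • LinearMap.proj α

section

variable {n m : ℕ} {h : ℝ} {Aplus AS : Finset (Fin n → ℤ)} {Ai : Fin n → Finset (Fin n → ℤ)}
  {AE : Fin m → Finset (Fin n → ℤ)} {Γ : Fin m → (Fin n → ℤ) → ℝ} {Z U : Fin m → ℝ}
  {σ : (Fin n → ℤ) → ℝ}

theorem discreteForm_apply (u η : (Fin n → ℤ) → ℝ) :
    discreteForm n m h Aplus AS Ai AE Γ Z σ u η =
      h ^ n * ∑ α ∈ Aplus, σ α * ∑ i, gridFwdDiff n h u α i * gridFwdDiff n h η α i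
        + ∑ l, (Z l)⁻¹ * ∑ α ∈ AE l, Γ l α * (u α * η α)
        + h ^ n * ∑ α ∈ AS, ∑ i,
            (if α ∈ Ai i ∧ α ∉ Aplus then (1 : ℝ) else 0)
              * (gridFwdDiff n h u α i * gridFwdDiff n h η α i) := by
  simp only [discreteForm, LinearMap.add_apply, LinearMap.smul_apply, LinearMap.sum_apply,
    LinearMap.compl₁₂_apply, LinearMap.mul_apply', gridFwdDiffₗ_apply, LinearMap.proj_apply,
    smul_eq_mul]

theorem discreteLoad_apply (η : (Fin n → ℤ) → ℝ) :
    discreteLoad n m AE Γ Z U η = ∑ l, U l / Z l * ∑ α ∈ AE l, Γ l α * η α := by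
  simp [discreteLoad, LinearMap.sum_apply]

theorem discreteForm_apply_eq_zero {A : Finset (Fin n → ℤ)} {η : (Fin n → ℤ) → ℝ}
    (hplus : ∀ α ∈ Aplus, ∀ i, α ∈ A ∧ α + Pi.single i 1 ∈ A)
    (hAi : ∀ i, ∀ α ∈ Ai i, α ∈ A ∧ α + Pi.single i 1 ∈ A)
    (hE : ∀ l, AE l ⊆ A) (hη : ∀ α ∈ A, η α = 0) (u : (Fin n → ℤ) → ℝ) :
    discreteForm n m h Aplus AS Ai AE Γ Z σ u η = 0 := by
  have hD : ∀ α i, α ∈ A ∧ α + Pi.single i 1 ∈ A → gridFwdDiff n h η α i = 0 :=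
    fun α i hα => by simp [gridFwdDiff, hη _ hα.1, hη _ hα.2]
  rw [discreteForm_apply, sum_eq_zero fun α hα => ?_, sum_eq_zero fun l _ => ?_,
    sum_eq_zero fun α _ => ?_]
  · simp
  · refine sum_eq_zero fun i _ => ?_
    split_ifs with hc
    · simp [hD α i (hAi i α hc.1)]
    · simp
  · rw [sum_eq_zero fun α hα => by rw [hη α (hE l hα), mul_zero, mul_zero], mul_zero]
  · simp [hD α _ (hplus α hα _)]

theorem discreteLoad_apply_eq_zero {A : Finset (Fin n → ℤ)} {η : (Fin n → ℤ) → ℝ}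
    (hE : ∀ l, AE l ⊆ A) (hη : ∀ α ∈ A, η α = 0) :
    discreteLoad n m AE Γ Z U η = 0 := by
  rw [discreteLoad_apply]
  exact sum_eq_zero fun l _ => by
    rw [sum_eq_zero fun α hα => by rw [hη α (hE l hα), mul_zero], mul_zero]

theorem discreteForm_self_eq_zero (hh : 0 < h) (hσ : ∀ α, 0 < σ α) (hZ : ∀ l, 0 < Z l)
    (hΓ : ∀ l α, 0 ≤ Γ l α) {u : (Fin n → ℤ) → ℝ}
    (hu : discreteForm n m h Aplus AS Ai AE Γ Z σ u u = 0) :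
    (∀ α i, α ∈ Aplus ∨ α ∈ AS ∧ α ∈ Ai i ∧ α ∉ Aplus → gridFwdDiff n h u α i = 0) ∧
      ∀ l, ∀ α ∈ AE l, 0 < Γ l α → u α = 0 := by
  have hθ : ∀ α i, 0 ≤ if α ∈ Ai i ∧ α ∉ Aplus then (1 : ℝ) else 0 := fun α i => by
    split_ifs <;> norm_num
  have hsq := fun α (_ : α ∈ Aplus) => sum_nonneg fun i (_ : i ∈ univ) =>
    mul_self_nonneg (gridFwdDiff n h u α i)
  have helec := fun l (_ : l ∈ univ) => sum_nonneg fun α (_ : α ∈ AE l) =>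
    mul_nonneg (hΓ l α) (mul_self_nonneg (u α))
  have hS := fun α (_ : α ∈ AS) => sum_nonneg fun i (_ : i ∈ univ) =>
    mul_nonneg (hθ α i) (mul_self_nonneg (gridFwdDiff n h u α i))
  have h1 := mul_nonneg (pow_pos hh n).le <|
    sum_nonneg fun α hα => mul_nonneg (hσ α).le (hsq α hα)
  have h2 := sum_nonneg fun l hl => mul_nonneg (inv_nonneg.2 (hZ l).le) (helec l hl)
  have h3 := mul_nonneg (pow_pos hh n).le (sum_nonneg hS)
  rw [discreteForm_apply, add_eq_zero_iff_of_nonneg (add_nonneg h1 h2) h3,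
    add_eq_zero_iff_of_nonneg h1 h2, mul_eq_zero, mul_eq_zero, or_iff_right (pow_pos hh n).ne',
    or_iff_right (pow_pos hh n).ne',
    sum_mul_eq_zero_iff_of_nonneg (fun α _ => (hσ α).le) hsq,
    sum_mul_eq_zero_iff_of_nonneg (fun l _ => inv_nonneg.2 (hZ l).le) helec,
    sum_eq_zero_iff_of_nonneg hS] at hu
  obtain ⟨⟨hcell_zero, helec_zero⟩, hbdry_zero⟩ := hu
  refine ⟨fun α i hα => ?_, fun l α hα hΓα => ?_⟩
  · rcases hα with hα | ⟨hα, hαi, hα'⟩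
    · exact (sum_mul_self_eq_zero_iff _ _).1 ((hcell_zero α hα).resolve_left (hσ α).ne') i (mem_univ i)
    · have := (sum_mul_eq_zero_iff_of_nonneg (fun i _ => hθ α i)
        (fun i _ => mul_self_nonneg _)).1 (hbdry_zero α hα) i (mem_univ i)
      simpa [hαi, hα'] using this
  · have := (sum_mul_eq_zero_iff_of_nonneg (fun α _ => hΓ l α) (fun α _ => mul_self_nonneg _)).1
      ((helec_zero l (mem_univ l)).resolve_left (inv_ne_zero (hZ l).ne')) α hα
    simpa [hΓα.ne'] using this

end

theorem discrete_state_exists_unique_general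
    (n m : ℕ)
    (h : ℝ) (hh : 0 < h)
    -- the index sets 𝒜(Q_h⁺), 𝒜(Q_h), 𝒜(S_h)
    (Aplus AQ AS : Finset (Fin n → ℤ))
    (Qh : Set (EuclideanSpace ℝ (Fin n))) (hQh : Qh = ⋃ α ∈ Aplus, gridCell n h α)
    (hAQ : ∀ α, α ∈ AQ ↔ gridCorner n h α ∈ Qh)
    -- the index sets 𝒜(Q_h^{(i)})
    (Ai : Fin n → Finset (Fin n → ℤ))
    (hAi : ∀ i α, α ∈ Ai i ↔ α ∈ AQ ∧ gridCorner n h (α + Pi.single i 1) ∈ Qh)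
    -- electrodes: pairwise disjoint Borel subsets of ∂Q
    (E : Fin m → Set (EuclideanSpace ℝ (Fin n)))
    -- Γ_{lα} = H^{n-1}(E_l ∩ C_h^α) and the index sets 𝒜(Ê_{lh})
    (Γ : Fin m → (Fin n → ℤ) → ℝ)
    (hΓ : ∀ l α, Γ l α = (μH[(n : ℝ) - 1] (E l ∩ gridCell n h α)).toReal)
    (AE : Fin m → Finset (Fin n → ℤ))
    (hAE : ∀ l α, α ∈ AE l ↔ α ∈ AQ ∧ (E l ∩ gridCell n h α).Nonempty)
    -- contact impedances, voltages, conductivity values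
    (Z : Fin m → ℝ) (hZ : ∀ l, 0 < Z l)
    (U : Fin m → ℝ)
    (σ : (Fin n → ℤ) → ℝ) (σ₀ : ℝ) (hσ₀ : 0 < σ₀) (hσ : ∀ α, σ₀ ≤ σ α)
    -- at least one Γ_{lα} with α ∈ 𝒜(Ê_{lh}) is positive
    (hΓpos : ∃ l, ∃ α ∈ AE l, 0 < Γ l α)
    -- the grid graph on 𝒜(Q_h), whose edges are the pairs {α, α+eᵢ} with
    -- α ∈ 𝒜(Q_h⁺) or α ∈ 𝒜(S_h) ∩ (𝒜(Q_h^{(i)}) ∖ 𝒜(Q_h⁺)), is connected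
    (hconn : ∀ α ∈ AQ, ∀ β ∈ AQ,
      Relation.ReflTransGen
        (fun γ δ => γ ∈ AQ ∧ δ ∈ AQ ∧ ∃ i : Fin n,
          (δ = γ + Pi.single i 1 ∧
            (γ ∈ Aplus ∨ (γ ∈ AS ∧ γ ∈ Ai i ∧ γ ∉ Aplus))) ∨
          (γ = δ + Pi.single i 1 ∧
            (δ ∈ Aplus ∨ (δ ∈ AS ∧ δ ∈ Ai i ∧ δ ∉ Aplus))))
        α β) :
    ∃! u : (Fin n → ℤ) → ℝ,
      (∀ α ∉ AQ, u α = 0) ∧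
      ∀ η : (Fin n → ℤ) → ℝ,
        h ^ n * ∑ α ∈ Aplus, σ α * ∑ i, gridFwdDiff n h u α i * gridFwdDiff n h η α i
          + ∑ l, (Z l)⁻¹ * ∑ α ∈ AE l, Γ l α * (u α * η α)
          + h ^ n * ∑ α ∈ AS, ∑ i,
              (if α ∈ Ai i ∧ α ∉ Aplus then (1 : ℝ) else 0)
                * (gridFwdDiff n h u α i * gridFwdDiff n h η α i)
        = ∑ l, U l / Z l * ∑ α ∈ AE l, Γ l α * η α := by
  have hAplus_mem : ∀ α ∈ Aplus, ∀ i, α ∈ AQ ∧ α + Pi.single i 1 ∈ AQ := fun α hα i =>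
    ⟨(hAQ α).2 (hQh ▸ Set.mem_biUnion hα (gridCorner_mem_gridCell hh.le α)),
      (hAQ _).2 (hQh ▸ Set.mem_biUnion hα (gridCorner_add_single_mem_gridCell hh.le α i))⟩
  have hAi_mem : ∀ i, ∀ α ∈ Ai i, α ∈ AQ ∧ α + Pi.single i 1 ∈ AQ := fun i α hα =>
    ⟨((hAi i α).1 hα).1, (hAQ _).2 ((hAi i α).1 hα).2⟩
  have hE : ∀ l, AE l ⊆ AQ := fun l α hα => ((hAE l α).1 hα).1
  have hker (u : (Fin n → ℤ) → ℝ) (hu : ∀ α ∉ AQ, u α = 0)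
      (hzero : discreteForm n m h Aplus AS Ai AE Γ Z σ u u = 0) : u = 0 := by
    obtain ⟨hD, hΓu⟩ := discreteForm_self_eq_zero hh (fun α => hσ₀.trans_le (hσ α)) hZ
      (fun l α => hΓ l α ▸ ENNReal.toReal_nonneg) hzero
    obtain ⟨l₀, α₀, hα₀, hΓ₀⟩ := hΓpos
    funext β
    by_cases hβ : β ∈ AQ
    · rw [Pi.zero_apply, ← hΓu l₀ α₀ hα₀ hΓ₀]
      refine ((hconn α₀ (hE l₀ hα₀) β hβ).apply_eq ?_).symm
      rintro γ δ ⟨-, -, i, ⟨rfl, hγ⟩ | ⟨rfl, hδ⟩⟩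
      · exact ((gridFwdDiff_eq_zero_iff hh.ne').1 (hD γ i hγ)).symm
      · exact (gridFwdDiff_eq_zero_iff hh.ne').1 (hD δ i hδ)
    · exact hu β hβ
  simpa only [discreteForm_apply, discreteLoad_apply] using
    LinearMap.BilinForm.existsUnique_supported_apply_eq AQ
      (B := discreteForm n m h Aplus AS Ai AE Γ Z σ) (L := discreteLoad n m AE Γ Z U)
      (fun u η hη => discreteForm_apply_eq_zero hAplus_mem hAi_mem hE hη u)
      (fun η hη => discreteLoad_apply_eq_zero hE hη) hker

/-- **Existence and uniqueness of the discrete state vector (Corollary 4.2).**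
Under the positivity assumption on some `Γ_{lα}` and connectedness of the grid graph,
there is exactly one grid function (normalized to vanish off `𝒜(Q_h)`) satisfying the
discrete variational identity for all grid test functions. -/
theorem discrete_state_exists_unique
    (n m : ℕ) (hn : n = 2 ∨ n = 3) (hm : 0 < m)
    (Q : Set (EuclideanSpace ℝ (Fin n))) (hQopen : IsOpen Q)
    (hQbdd : Bornology.IsBounded Q)
    (h : ℝ) (hh : 0 < h)
    -- the index sets 𝒜(Q_h⁺), 𝒜(Q_h), 𝒜(S_h)
    (Aplus AQ AS : Finset (Fin n → ℤ))
    (hAplus : ∀ α, α ∈ Aplus ↔ (gridCell n h α ∩ Q).Nonempty)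
    (Qh : Set (EuclideanSpace ℝ (Fin n))) (hQh : Qh = ⋃ α ∈ Aplus, gridCell n h α)
    (hAQ : ∀ α, α ∈ AQ ↔ gridCorner n h α ∈ Qh)
    (hAS : ∀ α, α ∈ AS ↔ gridCorner n h α ∈ frontier Qh)
    -- the index sets 𝒜(Q_h^{(i)})
    (Ai : Fin n → Finset (Fin n → ℤ))
    (hAi : ∀ i α, α ∈ Ai i ↔ α ∈ AQ ∧ gridCorner n h (α + Pi.single i 1) ∈ Qh)
    -- electrodes: pairwise disjoint Borel subsets of ∂Q
    (E : Fin m → Set (EuclideanSpace ℝ (Fin n)))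
    (hEsub : ∀ l, E l ⊆ frontier Q) (hEmeas : ∀ l, MeasurableSet (E l))
    (hEdisj : Pairwise (Function.onFun Disjoint E))
    -- Γ_{lα} = H^{n-1}(E_l ∩ C_h^α) and the index sets 𝒜(Ê_{lh})
    (Γ : Fin m → (Fin n → ℤ) → ℝ)
    (hΓ : ∀ l α, Γ l α = (μH[(n : ℝ) - 1] (E l ∩ gridCell n h α)).toReal)
    (AE : Fin m → Finset (Fin n → ℤ))
    (hAE : ∀ l α, α ∈ AE l ↔ α ∈ AQ ∧ (E l ∩ gridCell n h α).Nonempty)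
    -- contact impedances, voltages, conductivity values
    (Z : Fin m → ℝ) (hZ : ∀ l, 0 < Z l)
    (U : Fin m → ℝ)
    (σ : (Fin n → ℤ) → ℝ) (σ₀ : ℝ) (hσ₀ : 0 < σ₀) (hσ : ∀ α, σ₀ ≤ σ α)
    -- structural assumptions
    (hSsub : ∀ i : Fin n, ∀ α ∈ Ai i, α ∉ Aplus → α ∈ AS)
    (hSfin : μH[(n : ℝ) - 1] (frontier Q) ≠ ⊤)
    (hΓsum : ∀ l, ∑ α ∈ AE l, Γ l α ≤ (μH[(n : ℝ) - 1] (frontier Q)).toReal)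
    -- at least one Γ_{lα} with α ∈ 𝒜(Ê_{lh}) is positive
    (hΓpos : ∃ l, ∃ α ∈ AE l, 0 < Γ l α)
    -- the grid graph on 𝒜(Q_h), whose edges are the pairs {α, α+eᵢ} with
    -- α ∈ 𝒜(Q_h⁺) or α ∈ 𝒜(S_h) ∩ (𝒜(Q_h^{(i)}) ∖ 𝒜(Q_h⁺)), is connected
    (hconn : ∀ α ∈ AQ, ∀ β ∈ AQ,
      Relation.ReflTransGen
        (fun γ δ => γ ∈ AQ ∧ δ ∈ AQ ∧ ∃ i : Fin n,
          (δ = γ + Pi.single i 1 ∧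
            (γ ∈ Aplus ∨ (γ ∈ AS ∧ γ ∈ Ai i ∧ γ ∉ Aplus))) ∨
          (γ = δ + Pi.single i 1 ∧
            (δ ∈ Aplus ∨ (δ ∈ AS ∧ δ ∈ Ai i ∧ δ ∉ Aplus))))
        α β) :
    ∃! u : (Fin n → ℤ) → ℝ,
      (∀ α ∉ AQ, u α = 0) ∧
      ∀ η : (Fin n → ℤ) → ℝ,
        h ^ n * ∑ α ∈ Aplus, σ α * ∑ i, gridFwdDiff n h u α i * gridFwdDiff n h η α i
          + ∑ l, (Z l)⁻¹ * ∑ α ∈ AE l, Γ l α * (u α * η α)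
          + h ^ n * ∑ α ∈ AS, ∑ i,
              (if α ∈ Ai i ∧ α ∉ Aplus then (1 : ℝ) else 0)
                * (gridFwdDiff n h u α i * gridFwdDiff n h η α i)
        = ∑ l, U l / Z l * ∑ α ∈ AE l, Γ l α * η α :=
  discrete_state_exists_unique_general n m h hh Aplus AQ AS Qh hQh hAQ Ai hAi E Γ hΓ AE hAE Z hZ U σ
    σ₀ hσ₀ hσ hΓpos hconn
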